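/- Suppose x, y, θ, p : ℝ × [0,ℓ] → ℝ are smooth and satisfy the free planar Cosserat rod equations ρẍ + Kx⁗ = (p x′)′, ρÿ + Ky⁗ = (p y′)′, αθ̈ − βθ″ = 0, together with the inextensibility constraint (x′)² + (y′)² = 1, on ℝ × [0,ℓ], and suppose that for all t ∈ ℝ the boundary conditions p x′ − K x‴ = 0, p y′ − K y‴ = 0, and x″ = y″ = 0 hold at s = 0 and s = ℓ. Then the total angular momentum ∫₀^ℓ ρ (x ẏ − y ẋ)(t, s) ds is constant in t. -/

import Mathlib

/-!
The angular momentum density `L = ρ (x ẏ - y ẋ)` satisfies a one-dimensional conservation law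
`∂ₜ L = ∂ₛ F`: by the equations of motion `∂ₜ L = ρ (x ÿ - y ẍ)` is the arclength derivative of the
flux `F = x (p y′ - K y‴) - y (p x′ - K x‴) + K (x′ y″ - y′ x″)`. The free-end boundary conditions
make `F` vanish at `s = 0` and `s = ℓ`, so `d/dt ∫₀^ℓ L ds = F(ℓ) - F(0) = 0`.
-/

open MeasureTheory

/-- Partial derivative with respect to the first (time) variable. -/
noncomputable def pt (f : ℝ → ℝ → ℝ) : ℝ → ℝ → ℝ := fun t s => deriv (fun τ => f τ s) t

/-- Partial derivative with respect to the second (arclength) variable. -/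
noncomputable def ps (f : ℝ → ℝ → ℝ) : ℝ → ℝ → ℝ := fun t s => deriv (fun σ => f t σ) s

/-- Smoothness of a field of two real variables. -/
def Smooth2 (f : ℝ → ℝ → ℝ) : Prop := ContDiff ℝ (⊤ : ℕ∞) (fun p : ℝ × ℝ => f p.1 p.2)

/-- Energy density of the planar Cosserat rod. -/
noncomputable def Edens (ρ α β K : ℝ) (x y θ : ℝ → ℝ → ℝ) : ℝ → ℝ → ℝ := fun t s =>
  ρ / 2 * ((pt x t s) ^ 2 + (pt y t s) ^ 2) + α / 2 * (pt θ t s) ^ 2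
    + K / 2 * ((ps (ps x) t s) ^ 2 + (ps (ps y) t s) ^ 2) + β / 2 * (ps θ t s) ^ 2

namespace Smooth2

variable {f : ℝ → ℝ → ℝ}

theorem continuous (hf : Smooth2 f) : Continuous (fun q : ℝ × ℝ => f q.1 q.2) :=
  ContDiff.continuous hf

theorem continuous_right (hf : Smooth2 f) (t : ℝ) : Continuous (f t) :=
  hf.continuous.comp (Continuous.prodMk_right t)

theorem hasDerivAt_fderiv_time (hf : Smooth2 f) (t s : ℝ) :
    HasDerivAt (fun τ => f τ s) (fderiv ℝ (fun q : ℝ × ℝ => f q.1 q.2) (t, s) (1, 0)) t := by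
  have hline : HasDerivAt (fun τ : ℝ => (τ, s)) ((1 : ℝ), (0 : ℝ)) t :=
    (hasDerivAt_id t).prodMk (hasDerivAt_const t s)
  exact (hf.differentiable (by simp) (t, s)).hasFDerivAt.comp_hasDerivAt t hline

theorem hasDerivAt_fderiv_arclength (hf : Smooth2 f) (t s : ℝ) :
    HasDerivAt (fun σ => f t σ) (fderiv ℝ (fun q : ℝ × ℝ => f q.1 q.2) (t, s) (0, 1)) s := by
  have hline : HasDerivAt (fun σ : ℝ => (t, σ)) ((0 : ℝ), (1 : ℝ)) s :=
    (hasDerivAt_const s t).prodMk (hasDerivAt_id s)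
  exact (hf.differentiable (by simp) (t, s)).hasFDerivAt.comp_hasDerivAt s hline

theorem hasDerivAt_pt (hf : Smooth2 f) (t s : ℝ) :
    HasDerivAt (fun τ => f τ s) (pt f t s) t :=
  (hf.hasDerivAt_fderiv_time t s).differentiableAt.hasDerivAt

theorem hasDerivAt_ps (hf : Smooth2 f) (t s : ℝ) :
    HasDerivAt (fun σ => f t σ) (ps f t s) s :=
  (hf.hasDerivAt_fderiv_arclength t s).differentiableAt.hasDerivAt

theorem pt (hf : Smooth2 f) : Smooth2 (_root_.pt f) := by
  have h : (fun q : ℝ × ℝ => _root_.pt f q.1 q.2)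
      = fun q => fderiv ℝ (fun q : ℝ × ℝ => f q.1 q.2) q (1, 0) :=
    funext fun q => (hf.hasDerivAt_fderiv_time q.1 q.2).deriv
  unfold Smooth2
  rw [h]
  exact (hf.fderiv_right (by simp)).clm_apply contDiff_const

theorem ps (hf : Smooth2 f) : Smooth2 (_root_.ps f) := by
  have h : (fun q : ℝ × ℝ => _root_.ps f q.1 q.2)
      = fun q => fderiv ℝ (fun q : ℝ × ℝ => f q.1 q.2) q (0, 1) :=
    funext fun q => (hf.hasDerivAt_fderiv_arclength q.1 q.2).deriv
  unfold Smooth2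
  rw [h]
  exact (hf.fderiv_right (by simp)).clm_apply contDiff_const

end Smooth2

theorem hasDerivAt_intervalIntegral_of_continuous_deriv {A A' : ℝ → ℝ → ℝ} (a b t₀ : ℝ)
    (hA : ∀ t s, HasDerivAt (fun τ => A τ s) (A' t s) t) (hA₀ : ∀ t, Continuous (A t))
    (hA' : Continuous (fun q : ℝ × ℝ => A' q.1 q.2)) :
    HasDerivAt (fun t => ∫ s in a..b, A t s) (∫ s in a..b, A' t₀ s) t₀ := by
  obtain ⟨C, hC⟩ := ((isCompact_closedBall t₀ 1).prod isCompact_uIcc).exists_bound_of_continuousOn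
    hA'.continuousOn
  have hbound : ∀ᵐ s ∂volume, s ∈ Set.uIoc a b → ∀ t ∈ Metric.ball t₀ 1, ‖A' t s‖ ≤ C :=
    Filter.Eventually.of_forall fun s hs t ht =>
      hC (t, s) ⟨Metric.ball_subset_closedBall ht, Set.uIoc_subset_uIcc hs⟩
  exact (intervalIntegral.hasDerivAt_integral_of_dominated_loc_of_deriv_le
    (Metric.ball_mem_nhds t₀ one_pos)
    (Filter.Eventually.of_forall fun t => (hA₀ t).aestronglyMeasurable)
    ((hA₀ t₀).intervalIntegrable a b)
    (hA'.comp (Continuous.prodMk_right t₀)).aestronglyMeasurable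
    hbound intervalIntegrable_const
    (Filter.Eventually.of_forall fun s _ t _ => hA t s)).2

theorem intervalIntegral_eq_of_conservation_law {A F : ℝ → ℝ → ℝ} {a b : ℝ} (hab : a ≤ b)
    (hA : Smooth2 A) (hflux : ∀ t, ∀ s ∈ Set.Icc a b, HasDerivAt (F t) (pt A t s) s)
    (ha : ∀ t, F t a = 0) (hb : ∀ t, F t b = 0) (t₁ t₂ : ℝ) :
    ∫ s in a..b, A t₁ s = ∫ s in a..b, A t₂ s := by
  have hzero : ∀ t, ∫ s in a..b, pt A t s = 0 := fun t => by
    rw [intervalIntegral.integral_eq_sub_of_hasDerivAt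
      (fun s hs => hflux t s (Set.uIcc_of_le hab ▸ hs))
      ((hA.pt.continuous_right t).intervalIntegrable a b), ha, hb, sub_zero]
  have hderiv : ∀ t, HasDerivAt (fun t => ∫ s in a..b, A t s) 0 t := fun t => by
    simpa only [hzero] using hasDerivAt_intervalIntegral_of_continuous_deriv a b t
      hA.hasDerivAt_pt hA.continuous_right hA.pt.continuous
  exact is_const_of_deriv_eq_zero (fun t => (hderiv t).differentiableAt)
    (fun t => (hderiv t).deriv) t₁ t₂

noncomputable def angularMomentumDensity (ρ : ℝ) (x y : ℝ → ℝ → ℝ) : ℝ → ℝ → ℝ :=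
  fun t s => ρ * (x t s * pt y t s - y t s * pt x t s)

noncomputable def angularMomentumFlux (K : ℝ) (x y p : ℝ → ℝ → ℝ) : ℝ → ℝ → ℝ := fun t s =>
  x t s * (p t s * ps y t s - K * ps (ps (ps y)) t s)
    - y t s * (p t s * ps x t s - K * ps (ps (ps x)) t s)
    + K * (ps x t s * ps (ps y) t s - ps y t s * ps (ps x) t s)

section AngularMomentum

variable {ρ K : ℝ} {x y p : ℝ → ℝ → ℝ}

theorem Smooth2.angularMomentumDensity (hx : Smooth2 x) (hy : Smooth2 y) :
    Smooth2 (angularMomentumDensity ρ x y) :=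
  contDiff_const.mul ((ContDiff.mul hx hy.pt).sub (ContDiff.mul hy hx.pt))

theorem pt_angularMomentumDensity (hx : Smooth2 x) (hy : Smooth2 y) (t s : ℝ) :
    pt (angularMomentumDensity ρ x y) t s = ρ * (x t s * pt (pt y) t s - y t s * pt (pt x) t s) := by
  have h := (((hx.hasDerivAt_pt t s).mul (hy.pt.hasDerivAt_pt t s)).sub
    ((hy.hasDerivAt_pt t s).mul (hx.pt.hasDerivAt_pt t s))).const_mul ρ
  exact h.deriv.trans (by ring)

theorem ps_mul_ps (hp : Smooth2 p) (hx : Smooth2 x) (t s : ℝ) :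
    ps (fun t' s' => p t' s' * ps x t' s') t s = ps p t s * ps x t s + p t s * ps (ps x) t s :=
  ((hp.hasDerivAt_ps t s).mul (hx.ps.hasDerivAt_ps t s)).deriv

theorem hasDerivAt_angularMomentumFlux (hx : Smooth2 x) (hy : Smooth2 y) (hp : Smooth2 p)
    {t s : ℝ}
    (heqx : ρ * pt (pt x) t s + K * ps (ps (ps (ps x))) t s
      = ps (fun t' s' => p t' s' * ps x t' s') t s)
    (heqy : ρ * pt (pt y) t s + K * ps (ps (ps (ps y))) t s
      = ps (fun t' s' => p t' s' * ps y t' s') t s) :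
    HasDerivAt (angularMomentumFlux K x y p t) (pt (angularMomentumDensity ρ x y) t s) s := by
  have hstress (u : ℝ → ℝ → ℝ) (hu : Smooth2 u) :=
    ((hp.hasDerivAt_ps t s).mul (hu.ps.hasDerivAt_ps t s)).sub
      ((hu.ps.ps.ps.hasDerivAt_ps t s).const_mul K)
  have hbend := ((hx.ps.hasDerivAt_ps t s).mul (hy.ps.ps.hasDerivAt_ps t s)).sub
    ((hy.ps.hasDerivAt_ps t s).mul (hx.ps.ps.hasDerivAt_ps t s))
  rw [ps_mul_ps hp hx] at heqx
  rw [ps_mul_ps hp hy] at heqy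
  refine (((hx.hasDerivAt_ps t s).mul (hstress y hy)).sub
    ((hy.hasDerivAt_ps t s).mul (hstress x hx))).add (hbend.const_mul K) |>.congr_deriv ?_
  simp only [pt_angularMomentumDensity hx hy, Pi.mul_apply, Pi.sub_apply]
  linear_combination y t s * heqx - x t s * heqy

theorem angularMomentumFlux_eq_zero {t s : ℝ}
    (hstress_x : p t s * ps x t s - K * ps (ps (ps x)) t s = 0)
    (hstress_y : p t s * ps y t s - K * ps (ps (ps y)) t s = 0)
    (hcurv_x : ps (ps x) t s = 0) (hcurv_y : ps (ps y) t s = 0) :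
    angularMomentumFlux K x y p t s = 0 := by
  simp only [angularMomentumFlux, hstress_x, hstress_y, hcurv_x, hcurv_y]
  ring

end AngularMomentum

theorem angular_momentum_conservation_free_rod_general
    (ρ K ℓ : ℝ) (hℓ : 0 < ℓ)
    (x y p : ℝ → ℝ → ℝ)
    (hx : Smooth2 x) (hy : Smooth2 y) (hp : Smooth2 p)
    (heqx : ∀ t : ℝ, ∀ s ∈ Set.Icc (0 : ℝ) ℓ,
      ρ * pt (pt x) t s + K * ps (ps (ps (ps x))) t s
        = ps (fun t' s' => p t' s' * ps x t' s') t s)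
    (heqy : ∀ t : ℝ, ∀ s ∈ Set.Icc (0 : ℝ) ℓ,
      ρ * pt (pt y) t s + K * ps (ps (ps (ps y))) t s
        = ps (fun t' s' => p t' s' * ps y t' s') t s)
    (hbc : ∀ t : ℝ, ∀ s : ℝ, s = 0 ∨ s = ℓ →
      p t s * ps x t s - K * ps (ps (ps x)) t s = 0 ∧
      p t s * ps y t s - K * ps (ps (ps y)) t s = 0 ∧
      ps (ps x) t s = 0 ∧ ps (ps y) t s = 0) :
    ∀ t₁ t₂ : ℝ,
      (∫ s in (0 : ℝ)..ℓ, ρ * (x t₁ s * pt y t₁ s - y t₁ s * pt x t₁ s))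
        = ∫ s in (0 : ℝ)..ℓ, ρ * (x t₂ s * pt y t₂ s - y t₂ s * pt x t₂ s) := by
  have hfree_end (t s : ℝ) (hs : s = 0 ∨ s = ℓ) : angularMomentumFlux K x y p t s = 0 :=
    let ⟨h₁, h₂, h₃, h₄⟩ := hbc t s hs
    angularMomentumFlux_eq_zero h₁ h₂ h₃ h₄
  exact intervalIntegral_eq_of_conservation_law hℓ.le (hx.angularMomentumDensity hy)
    (fun t s hs => hasDerivAt_angularMomentumFlux hx hy hp (heqx t s hs) (heqy t s hs))
    (fun t => hfree_end t 0 (.inl rfl)) (fun t => hfree_end t ℓ (.inr rfl))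

/-- conservation of total angular momentum for the free planar Cosserat rod. -/
theorem angular_momentum_conservation_free_rod
    (ρ α β K ℓ : ℝ) (hρ : 0 < ρ) (hα : 0 < α) (hβ : 0 < β) (hK : 0 < K) (hℓ : 0 < ℓ)
    (x y θ p : ℝ → ℝ → ℝ)
    (hx : Smooth2 x) (hy : Smooth2 y) (hθ : Smooth2 θ) (hp : Smooth2 p)
    (heqx : ∀ t : ℝ, ∀ s ∈ Set.Icc (0 : ℝ) ℓ,
      ρ * pt (pt x) t s + K * ps (ps (ps (ps x))) t s
        = ps (fun t' s' => p t' s' * ps x t' s') t s)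
    (heqy : ∀ t : ℝ, ∀ s ∈ Set.Icc (0 : ℝ) ℓ,
      ρ * pt (pt y) t s + K * ps (ps (ps (ps y))) t s
        = ps (fun t' s' => p t' s' * ps y t' s') t s)
    (heqθ : ∀ t : ℝ, ∀ s ∈ Set.Icc (0 : ℝ) ℓ,
      α * pt (pt θ) t s - β * ps (ps θ) t s = 0)
    (hinext : ∀ t : ℝ, ∀ s ∈ Set.Icc (0 : ℝ) ℓ, (ps x t s) ^ 2 + (ps y t s) ^ 2 = 1)
    (hbc : ∀ t : ℝ, ∀ s : ℝ, s = 0 ∨ s = ℓ →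
      p t s * ps x t s - K * ps (ps (ps x)) t s = 0 ∧
      p t s * ps y t s - K * ps (ps (ps y)) t s = 0 ∧
      ps (ps x) t s = 0 ∧ ps (ps y) t s = 0) :
    ∀ t₁ t₂ : ℝ,
      (∫ s in (0 : ℝ)..ℓ, ρ * (x t₁ s * pt y t₁ s - y t₁ s * pt x t₁ s))
        = ∫ s in (0 : ℝ)..ℓ, ρ * (x t₂ s * pt y t₂ s - y t₂ s * pt x t₂ s) :=
  angular_momentum_conservation_free_rod_general ρ K ℓ hℓ x y p hx hy hp heqx heqy hbc
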